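/- arXiv:2001.10391 — 5 statements merged into one kernel-verified Lean document; each statement's English description precedes it below -/
import Mathlib

section
/- Let m, k ≥ 1, let X ∈ ℝ^{m×k} have entries X_{ij} > 0, and let Y be a random matrix in ℕ^{m×k} with independent entries Y_{ij} ~ Poisson(X_{ij}). Let f : ℕ^{m×k} → (0,∞)^{m×k} be a mapping with component functions f_{ij}, and assume that the families y ↦ P(Y=y) f_{ij}(y), y ↦ P(Y=y) |log f_{ij}(y)| and y ↦ P(Y=y) y_{ij} |log f_{ij}(y − E_{ij})| are summable for all (i,j). Define MUKLA(f(Y)) = Σ_{i=1}^m Σ_{j=1}^k [ f_{ij}(Y) − Y_{ij} log f_{ij}(Y − E_{ij}) ] and MKLA(f(Y), X) = Σ_{i=1}^m Σ_{j=1}^k E[ f_{ij}(Y) − X_{ij} − X_{ij} log( f_{ij}(Y) / X_{ij} ) ]. Then E[ MUKLA(f(Y)) ] = MKLA(f(Y), X) + Σ_{i=1}^m Σ_{j=1}^k ( X_{ij} − X_{ij} log X_{ij} ), i.e. MUKLA(f(Y)) is an unbiased estimator of the expected Kullback–Leibler analysis risk of f(Y) up to an additive constant not depending on f. -/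
set_option maxHeartbeats 1000000

/-- Product of summable nonnegative families over a finite pi type. -/
lemma hasSum_pi_fin : ∀ (n : ℕ) (β : Fin n → Type) (g : ∀ i, β i → ℝ)
    (a : Fin n → ℝ), (∀ i b, 0 ≤ g i b) → (∀ i, HasSum (g i) (a i)) →
    HasSum (fun y : ∀ i, β i => ∏ i, g i (y i)) (∏ i, a i) := by
  intro n
  induction n with
  | zero =>
    intro β g a _ _
    have h1 : (fun y : ∀ i : Fin 0, β i => ∏ i, g i (y i)) = fun _ => (1 : ℝ) := by
      funext y; simp
    have h2 : (∏ i, a i) = 1 := by simp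
    rw [h1, h2]
    simpa using hasSum_fintype (fun _ : ∀ i : Fin 0, β i => (1 : ℝ))
  | succ n ih =>
    intro β g a hnn hs
    have hrest : HasSum (fun v : ∀ i : Fin n, β (Fin.succ i) => ∏ i, g (Fin.succ i) (v i))
        (∏ i, a (Fin.succ i)) :=
      ih (fun i => β (Fin.succ i)) (fun i => g (Fin.succ i)) (fun i => a (Fin.succ i))
        (fun i b => hnn (Fin.succ i) b) (fun i => hs (Fin.succ i))
    have h0 : HasSum (g 0) (a 0) := hs 0
    have hsummable := h0.summable.mul_of_nonneg hrest.summable (fun b => hnn 0 b)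
      (fun v => Finset.prod_nonneg fun i _ => hnn (Fin.succ i) (v i))
    have hmul := h0.mul hrest hsummable
    apply ((Fin.consEquiv β).hasSum_iff).mp
    have heq : ((fun y : ∀ i, β i => ∏ i, g i (y i)) ∘ (Fin.consEquiv β))
        = fun p : β 0 × (∀ i : Fin n, β (Fin.succ i)) =>
            g 0 p.1 * ∏ i, g (Fin.succ i) (p.2 i) := by
      funext p
      simp [Fin.consEquiv, Fin.prod_univ_succ]
    rw [heq, Fin.prod_univ_succ]
    exact hmul

/-- `MUKLA` is an unbiased estimator of the expected Kullback–Leibler analysis risk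
(up to an additive constant) for matrices of independent Poisson entries. -/
theorem stmt3 (m k : ℕ) (hm : 1 ≤ m) (hk : 1 ≤ k)
    (X : Fin m → Fin k → ℝ) (hX : ∀ i j, 0 < X i j)
    (f : (Fin m → Fin k → ℕ) → Fin m → Fin k → ℝ)
    (hf : ∀ y i j, 0 < f y i j)
    (P : (Fin m → Fin k → ℕ) → ℝ)
    (hP : ∀ y, P y = ∏ r, ∏ s,
      Real.exp (-(X r s)) * X r s ^ (y r s) / (y r s).factorial)
    (h1 : ∀ i j, Summable fun y => P y * f y i j)
    (h2 : ∀ i j, Summable fun y => P y * |Real.log (f y i j)|)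
    (h3 : ∀ i j, Summable fun y => P y * (y i j : ℝ) *
      |Real.log (f (y - Pi.single i (Pi.single j 1)) i j)|) :
    (∑' y, P y * ∑ i, ∑ j,
        (f y i j - (y i j : ℝ) * Real.log (f (y - Pi.single i (Pi.single j 1)) i j)))
      = (∑ i, ∑ j, ∑' y, P y * (f y i j - X i j - X i j * Real.log (f y i j / X i j)))
          + ∑ i, ∑ j, (X i j - X i j * Real.log (X i j)) := by
  -- Notation for the one-point-mass matrix
  classical
  -- nonnegativity of P
  have hPnn : ∀ y, 0 ≤ P y := by
    intro y
    rw [hP]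
    apply Finset.prod_nonneg
    intro r _
    apply Finset.prod_nonneg
    intro s _
    have h1 := (hX r s).le
    positivity
  -- The Poisson pmf sums to 1 in each coordinate
  have hq1 : ∀ r s, HasSum
      (fun n : ℕ => Real.exp (-(X r s)) * X r s ^ n / n.factorial) 1 := by
    intro r s
    have h := ProbabilityTheory.poissonPMFRealSum (X r s).toNNReal
    simp only [ProbabilityTheory.poissonPMFReal,
      Real.coe_toNNReal _ (hX r s).le] at h
    exact h
  -- P has sum 1
  have hPsum1 : HasSum P 1 := by
    have hinner : ∀ r : Fin m, HasSum
        (fun v : Fin k → ℕ => ∏ s, Real.exp (-(X r s)) * X r s ^ (v s) / (v s).factorial)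
        1 := by
      intro r
      have h := hasSum_pi_fin k (fun _ => ℕ)
        (fun s n => Real.exp (-(X r s)) * X r s ^ n / n.factorial) (fun _ => 1)
        (fun s n => by have := (hX r s).le; positivity) (fun s => hq1 r s)
      simpa using h
    have h := hasSum_pi_fin m (fun _ => (Fin k → ℕ))
      (fun r v => ∏ s, Real.exp (-(X r s)) * X r s ^ (v s) / (v s).factorial)
      (fun _ => 1)
      (fun r v => Finset.prod_nonneg fun s _ => by have := (hX r s).le; positivity)
      hinner
    simp only [Finset.prod_const_one] at h
    have hPeq : P = fun y : Fin m → Fin k → ℕ =>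
        ∏ r, ∏ s, Real.exp (-(X r s)) * X r s ^ (y r s) / (y r s).factorial := by
      funext y; exact hP y
    rw [hPeq]
    exact h
  have hPsummable : Summable P := hPsum1.summable
  have hPtsum : ∑' y, P y = 1 := hPsum1.tsum_eq
  -- The key shift identity for P
  have key : ∀ (i : Fin m) (j : Fin k) (z : Fin m → Fin k → ℕ),
      P (z + Pi.single i (Pi.single j 1)) * ((z i j : ℝ) + 1) = X i j * P z := by
    intro i j z
    set e : Fin m → Fin k → ℕ := Pi.single i (Pi.single j 1) with he
    have happ_other : ∀ r s, (r ≠ i ∨ s ≠ j) → (z + e) r s = z r s := by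
      intro r s hrs
      have : e r s = 0 := by
        rcases hrs with hr | hs
        · simp [he, Pi.single_eq_of_ne hr]
        · rcases eq_or_ne r i with hri | hri
          · subst hri; simp [he, Pi.single_eq_of_ne hs]
          · simp [he, Pi.single_eq_of_ne hri]
      simp [Pi.add_apply, this]
    have happ_ij : (z + e) i j = z i j + 1 := by
      simp [he, Pi.add_apply]
    have houter : ∀ (w : Fin m → Fin k → ℕ),
        (∏ r, ∏ s, Real.exp (-(X r s)) * X r s ^ (w r s) / (w r s).factorial)
          = (Real.exp (-(X i j)) * X i j ^ (w i j) / (w i j).factorial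
              * ∏ s ∈ Finset.univ.erase j,
                  Real.exp (-(X i s)) * X i s ^ (w i s) / (w i s).factorial)
            * ∏ r ∈ Finset.univ.erase i,
                ∏ s, Real.exp (-(X r s)) * X r s ^ (w r s) / (w r s).factorial := by
      intro w
      rw [← Finset.mul_prod_erase Finset.univ _ (Finset.mem_univ i),
        ← Finset.mul_prod_erase Finset.univ
          (fun s => Real.exp (-(X i s)) * X i s ^ (w i s) / (w i s).factorial)
          (Finset.mem_univ j)]
    rw [hP, hP, houter, houter]
    have hE1 : (∏ s ∈ Finset.univ.erase j,
        Real.exp (-(X i s)) * X i s ^ ((z + e) i s) / ((z + e) i s).factorial)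
        = ∏ s ∈ Finset.univ.erase j,
            Real.exp (-(X i s)) * X i s ^ (z i s) / (z i s).factorial := by
      apply Finset.prod_congr rfl
      intro s hs
      rw [happ_other i s (Or.inr (Finset.ne_of_mem_erase hs))]
    have hE2 : (∏ r ∈ Finset.univ.erase i,
        ∏ s, Real.exp (-(X r s)) * X r s ^ ((z + e) r s) / ((z + e) r s).factorial)
        = ∏ r ∈ Finset.univ.erase i,
            ∏ s, Real.exp (-(X r s)) * X r s ^ (z r s) / (z r s).factorial := by
      apply Finset.prod_congr rfl
      intro r hr
      apply Finset.prod_congr rfl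
      intro s _
      rw [happ_other r s (Or.inl (Finset.ne_of_mem_erase hr))]
    rw [hE1, hE2, happ_ij]
    have hfac : ((z i j + 1).factorial : ℝ) = ((z i j : ℝ) + 1) * (z i j).factorial := by
      rw [Nat.factorial_succ]; push_cast; ring
    have hfacne : ((z i j).factorial : ℝ) ≠ 0 := by
      exact_mod_cast (z i j).factorial_ne_zero
    have hscalar : Real.exp (-(X i j)) * X i j ^ (z i j + 1) / ((z i j + 1).factorial)
        * ((z i j : ℝ) + 1)
        = X i j * (Real.exp (-(X i j)) * X i j ^ (z i j) / (z i j).factorial) := by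
      rw [pow_succ, hfac]
      have hne : ((z i j : ℝ) + 1) ≠ 0 := by positivity
      field_simp
    calc Real.exp (-(X i j)) * X i j ^ (z i j + 1) / ((z i j + 1).factorial)
          * (∏ s ∈ Finset.univ.erase j,
              Real.exp (-(X i s)) * X i s ^ (z i s) / (z i s).factorial)
          * (∏ r ∈ Finset.univ.erase i,
              ∏ s, Real.exp (-(X r s)) * X r s ^ (z r s) / (z r s).factorial)
          * ((z i j : ℝ) + 1)
        = (Real.exp (-(X i j)) * X i j ^ (z i j + 1) / ((z i j + 1).factorial)
            * ((z i j : ℝ) + 1))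
          * (∏ s ∈ Finset.univ.erase j,
              Real.exp (-(X i s)) * X i s ^ (z i s) / (z i s).factorial)
          * (∏ r ∈ Finset.univ.erase i,
              ∏ s, Real.exp (-(X r s)) * X r s ^ (z r s) / (z r s).factorial) := by ring
      _ = _ := by rw [hscalar]; ring
  -- Stein identity
  have stein : ∀ (i : Fin m) (j : Fin k) (g : (Fin m → Fin k → ℕ) → ℝ),
      ∑' y, P y * ((y i j : ℝ) * g (y - Pi.single i (Pi.single j 1)))
        = X i j * ∑' y, P y * g y := by
    intro i j g
    set e : Fin m → Fin k → ℕ := Pi.single i (Pi.single j 1) with he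
    have heij : e i j = 1 := by simp [he]
    have hT : Function.Injective (fun z : Fin m → Fin k → ℕ => z + e) :=
      add_left_injective e
    have hsupp : Function.support (fun y => P y * ((y i j : ℝ) * g (y - e)))
        ⊆ Set.range (fun z : Fin m → Fin k → ℕ => z + e) := by
      intro y hy
      rcases Nat.eq_zero_or_pos (y i j) with h0 | hpos
      · exfalso; apply hy; simp [h0]
      · refine ⟨y - e, ?_⟩
        funext r s
        show (y - e) r s + e r s = y r s
        rcases eq_or_ne r i with hr | hr
        · subst hr
          rcases eq_or_ne s j with hs | hs
          · subst hs
            simp only [Pi.sub_apply, heij]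
            omega
          · have : e r s = 0 := by simp [he, Pi.single_eq_of_ne hs]
            simp [Pi.sub_apply, this]
        · have : e r s = 0 := by simp [he, Pi.single_eq_of_ne hr]
          simp [Pi.sub_apply, this]
    have htsum := hT.tsum_eq hsupp
    rw [← htsum]
    rw [← tsum_mul_left]
    apply tsum_congr
    intro z
    have hsub : (z + e) - e = z := by
      funext r s
      show (z r s + e r s) - e r s = z r s
      omega
    have hij : ((z + e) i j : ℝ) = (z i j : ℝ) + 1 := by
      simp only [Pi.add_apply, heij]
      push_cast
      ring
    show P (z + e) * (((z + e) i j : ℝ) * g ((z + e) - e)) = X i j * (P z * g z)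
    rw [hsub, hij]
    have := key i j z
    calc P (z + e) * (((z i j : ℝ) + 1) * g z)
        = (P (z + e) * ((z i j : ℝ) + 1)) * g z := by ring
      _ = (X i j * P z) * g z := by rw [this]
      _ = X i j * (P z * g z) := by ring
  -- summability consequences
  have s2 : ∀ i j, Summable fun y => P y * Real.log (f y i j) := by
    intro i j
    apply Summable.of_abs
    simpa [abs_mul, abs_of_nonneg (hPnn _)] using h2 i j
  have s3 : ∀ i j, Summable fun y =>
      P y * ((y i j : ℝ) * Real.log (f (y - Pi.single i (Pi.single j 1)) i j)) := by
    intro i j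
    apply Summable.of_abs
    have := h3 i j
    have heq : (fun y => |P y * ((y i j : ℝ) *
        Real.log (f (y - Pi.single i (Pi.single j 1)) i j))|)
        = fun y => P y * (y i j : ℝ) *
            |Real.log (f (y - Pi.single i (Pi.single j 1)) i j)| := by
      funext y
      rw [abs_mul, abs_mul, abs_of_nonneg (hPnn y), Nat.abs_cast, mul_assoc]
    rw [heq]
    exact this
  have ssum : ∀ i j, Summable fun y =>
      P y * (f y i j - (y i j : ℝ) *
        Real.log (f (y - Pi.single i (Pi.single j 1)) i j)) := by
    intro i j
    have := (h1 i j).sub (s3 i j)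
    simpa [mul_sub] using this
  -- per-entry identity
  have hij : ∀ (i : Fin m) (j : Fin k),
      (∑' y, P y * (f y i j - (y i j : ℝ) *
          Real.log (f (y - Pi.single i (Pi.single j 1)) i j)))
        = (∑' y, P y * (f y i j - X i j - X i j * Real.log (f y i j / X i j)))
            + (X i j - X i j * Real.log (X i j)) := by
    intro i j
    have hL : (∑' y, P y * (f y i j - (y i j : ℝ) *
          Real.log (f (y - Pi.single i (Pi.single j 1)) i j)))
        = (∑' y, P y * f y i j)
          - X i j * ∑' y, P y * Real.log (f y i j) := by
      have hsplit : (fun y => P y * (f y i j - (y i j : ℝ) *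
          Real.log (f (y - Pi.single i (Pi.single j 1)) i j)))
          = fun y => P y * f y i j - P y * ((y i j : ℝ) *
              Real.log (f (y - Pi.single i (Pi.single j 1)) i j)) := by
        funext y; ring
      rw [hsplit, Summable.tsum_sub (h1 i j) (s3 i j),
        stein i j (fun y => Real.log (f y i j))]
    have hR : (∑' y, P y * (f y i j - X i j - X i j * Real.log (f y i j / X i j)))
        = (∑' y, P y * f y i j) - X i j
          - X i j * (∑' y, P y * Real.log (f y i j))
          + X i j * Real.log (X i j) := by
      have hexp : (fun y => P y * (f y i j - X i j - X i j * Real.log (f y i j / X i j)))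
          = fun y => (P y * f y i j - X i j * P y
              - X i j * (P y * Real.log (f y i j)))
              + (X i j * Real.log (X i j)) * P y := by
        funext y
        rw [Real.log_div (hf y i j).ne' (hX i j).ne']
        ring
      rw [hexp]
      have sA := h1 i j
      have sB := hPsummable.mul_left (X i j)
      have sC := (s2 i j).mul_left (X i j)
      have sD := hPsummable.mul_left (X i j * Real.log (X i j))
      rw [Summable.tsum_add ((sA.sub sB).sub sC) sD, Summable.tsum_sub (sA.sub sB) sC,
        Summable.tsum_sub sA sB, tsum_mul_left, tsum_mul_left, tsum_mul_left, hPtsum]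
      ring
    rw [hL, hR]
    ring
  -- assemble
  have hLHS : (∑' y, P y * ∑ i, ∑ j,
      (f y i j - (y i j : ℝ) * Real.log (f (y - Pi.single i (Pi.single j 1)) i j)))
      = ∑ i, ∑ j, ∑' y, P y * (f y i j - (y i j : ℝ) *
          Real.log (f (y - Pi.single i (Pi.single j 1)) i j)) := by
    have hmulsum : (fun y => P y * ∑ i, ∑ j,
        (f y i j - (y i j : ℝ) * Real.log (f (y - Pi.single i (Pi.single j 1)) i j)))
        = fun y => ∑ i, ∑ j, P y * (f y i j - (y i j : ℝ) *
            Real.log (f (y - Pi.single i (Pi.single j 1)) i j)) := by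
      funext y
      rw [Finset.mul_sum]
      exact Finset.sum_congr rfl fun i _ => Finset.mul_sum _ _ _
    rw [hmulsum]
    rw [Summable.tsum_finsetSum (fun i _ => summable_sum fun j _ => ssum i j)]
    exact Finset.sum_congr rfl fun i _ => Summable.tsum_finsetSum fun j _ => ssum i j
  rw [hLHS]
  calc (∑ i, ∑ j, ∑' y, P y * (f y i j - (y i j : ℝ) *
          Real.log (f (y - Pi.single i (Pi.single j 1)) i j)))
      = ∑ i, ∑ j, ((∑' y, P y * (f y i j - X i j - X i j * Real.log (f y i j / X i j)))
          + (X i j - X i j * Real.log (X i j))) := by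
        exact Finset.sum_congr rfl fun i _ => Finset.sum_congr rfl fun j _ => hij i j
    _ = _ := by
        rw [← Finset.sum_add_distrib]
        exact Finset.sum_congr rfl fun i _ => Finset.sum_add_distrib
end

section
/- Let m, k ≥ 1 and ℓ ≥ 1. Let Z^{(1)},…,Z^{(ℓ)} be independent random real m × k matrices such that, for each r, every entry of Z^{(r)} is square integrable with E[(Z^{(r)}_{ij})^2] = 1 for all (i,j) and E[Z^{(r)}_{ij} Z^{(r)}_{rs}] = 0 whenever (i,j) ≠ (r,s). Let M be an ℓ-multilinear map from (ℝ^{m×k})^ℓ to ℝ. Then for every (i,j): E[ (Z^{(1)}_{ij} · Z^{(2)}_{ij} ⋯ Z^{(ℓ)}_{ij}) · M(Z^{(1)},…,Z^{(ℓ)}) ] = M(E_{ij},…,E_{ij}), where E_{ij} is the matrix with entry 1 in position (i,j) and 0 elsewhere. -/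
/-!
Since `M` is multilinear, `(∏ r, Z⁽ʳ⁾ᵢⱼ) • M(Z⁽¹⁾,…,Z⁽ˡ⁾) = M(Z⁽¹⁾ᵢⱼ • Z⁽¹⁾,…,Z⁽ˡ⁾ᵢⱼ • Z⁽ˡ⁾)`.
Expanding a multilinear map in bases of finite-dimensional spaces and applying Fubini to each
product of coordinates shows that the integral of `M` against a product measure is `M` applied
to the means of its arguments. The mean of the matrix `Zᵢⱼ • Z` is `Eᵢⱼ`: its `(i',j')` entry is
`E[Zᵢⱼ Zᵢ'ⱼ']`, which is `1` or `0` by the normalization and decorrelation of the entries.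
-/

open MeasureTheory

namespace MultilinearMap

theorem apply_eq_sum_basis {R ι : Type*} [CommSemiring R] [Fintype ι] [DecidableEq ι]
    {E : ι → Type*} [∀ r, AddCommMonoid (E r)] [∀ r, Module R (E r)]
    {F : Type*} [AddCommMonoid F] [Module R F] {κ : ι → Type*} [∀ r, Fintype (κ r)]
    (M : MultilinearMap R E F) (b : ∀ r, Module.Basis (κ r) R (E r)) (v : ∀ r, E r) :
    M v = ∑ f : ∀ r, κ r, (∏ r, (b r).repr (v r) (f r)) • M (fun r => b r (f r)) := by
  calc M v = M (fun r => ∑ n, (b r).repr (v r) n • b r n) := by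
        simp only [Module.Basis.sum_repr]
    _ = _ := by
        rw [M.map_sum]
        exact Finset.sum_congr rfl fun f _ => M.map_smul_univ _ _

end MultilinearMap

theorem integral_multilinearMap_pi {ι : Type*} [Fintype ι] {α : ι → Type*}
    [∀ r, MeasurableSpace (α r)] {μ : ∀ r, Measure (α r)} [∀ r, SigmaFinite (μ r)]
    {E : ι → Type*} [∀ r, NormedAddCommGroup (E r)] [∀ r, NormedSpace ℝ (E r)]
    [∀ r, FiniteDimensional ℝ (E r)] {F : Type*} [NormedAddCommGroup F] [NormedSpace ℝ F]
    [CompleteSpace F]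
    (M : MultilinearMap ℝ E F) {X : ∀ r, α r → E r} (hX : ∀ r, Integrable (X r) (μ r)) :
    ∫ x, M (fun r => X r (x r)) ∂Measure.pi μ = M (fun r => ∫ a, X r a ∂μ r) := by
  classical
  set b := fun r => Module.finBasis ℝ (E r)
  have hcoord : ∀ r n, ∫ a, (b r).repr (X r a) n ∂μ r = (b r).repr (∫ a, X r a ∂μ r) n :=
    fun r n => (LinearMap.toContinuousLinearMap ((b r).coord n)).integral_comp_comm (hX r)
  have hint : ∀ r n, Integrable (fun a => (b r).repr (X r a) n) (μ r) :=
    fun r n => (LinearMap.toContinuousLinearMap ((b r).coord n)).integrable_comp (hX r)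
  conv_lhs => arg 2; ext x; rw [M.apply_eq_sum_basis b]
  rw [M.apply_eq_sum_basis b, integral_finsetSum _ fun f _ =>
    (Integrable.fintype_prod_dep fun r => hint r (f r)).smul_const _]
  refine Finset.sum_congr rfl fun f _ => ?_
  rw [integral_smul_const, integral_fintype_prod_eq_prod (fun r a => (b r).repr (X r a) (f r))]
  simp only [hcoord]

section MatrixEntries

variable {m k : Type*} [Fintype m] [Fintype k] {μ : Measure (m → k → ℝ)}

theorem integrable_entry_smul (hL2 : ∀ i j, MemLp (fun Z => Z i j) 2 μ) (i : m) (j : k) :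
    Integrable (fun Z : m → k → ℝ => Z i j • Z) μ :=
  Integrable.of_eval fun i' => Integrable.of_eval fun j' =>
    (hL2 i j).integrable_mul (hL2 i' j')

theorem integral_entry_smul_eq_single [DecidableEq m] [DecidableEq k]
    (hL2 : ∀ i j, MemLp (fun Z => Z i j) 2 μ) {i : m} {j : k}
    (hvar : ∫ Z, (Z i j) ^ 2 ∂μ = 1)
    (hcov : ∀ i' j', (i, j) ≠ (i', j') → ∫ Z, Z i j * Z i' j' ∂μ = 0) :
    ∫ Z, Z i j • Z ∂μ = Pi.single i (Pi.single j 1) := by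
  have hint := integrable_entry_smul hL2 i j
  ext i' j'
  rw [eval_integral hint.eval i', eval_integral (hint.eval i').eval j']
  simp only [Pi.smul_apply, smul_eq_mul]
  by_cases h : (i, j) = (i', j')
  · obtain ⟨rfl, rfl⟩ := Prod.ext_iff.mp h
    simpa [sq] using hvar
  · rw [hcov i' j' h]
    rcases eq_or_ne i' i with rfl | hi
    · simp_all
    · simp [hi]

end MatrixEntries

theorem stmt7_general (m k ℓ : ℕ)
    (μ : Fin ℓ → Measure (Fin m → Fin k → ℝ))
    [∀ r, IsProbabilityMeasure (μ r)]
    (hL2 : ∀ r i j, MemLp (fun Z => Z i j) 2 (μ r))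
    (hvar : ∀ r i j, ∫ Z, (Z i j) ^ 2 ∂(μ r) = 1)
    (hcov : ∀ r (i : Fin m) (j : Fin k) (i' : Fin m) (j' : Fin k), (i, j) ≠ (i', j') →
      ∫ Z, Z i j * Z i' j' ∂(μ r) = 0)
    (M : MultilinearMap ℝ (fun _ : Fin ℓ => (Fin m → Fin k → ℝ)) ℝ)
    (i : Fin m) (j : Fin k) :
    ∫ Z, (∏ r, Z r i j) * M Z ∂(Measure.pi μ)
      = M (fun _ => Pi.single i (Pi.single j 1)) := by
  calc ∫ Z, (∏ r, Z r i j) * M Z ∂(Measure.pi μ)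
      = ∫ Z, M (fun r => Z r i j • Z r) ∂(Measure.pi μ) := by
        simp only [M.map_smul_univ, smul_eq_mul]
    _ = M (fun r => ∫ A, A i j • A ∂(μ r)) :=
        integral_multilinearMap_pi M fun r => integrable_entry_smul (hL2 r) i j
    _ = M (fun _ => Pi.single i (Pi.single j 1)) := by
        simp only [integral_entry_smul_eq_single (hL2 _) (hvar _ i j) (hcov _ i j)]

/-- If `Z⁽¹⁾,…,Z⁽ˡ⁾` are independent random matrices (joint law the product of the
marginal laws `μ r`) with square integrable, normalized and uncorrelated entries,
then for any `ℓ`-multilinear form `M` on matrices,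
`E[(Z⁽¹⁾_{ij} ⋯ Z⁽ˡ⁾_{ij}) M(Z⁽¹⁾,…,Z⁽ˡ⁾)] = M(E_{ij},…,E_{ij})`. -/
theorem stmt7 (m k ℓ : ℕ) (hm : 1 ≤ m) (hk : 1 ≤ k) (hℓ : 1 ≤ ℓ)
    (μ : Fin ℓ → Measure (Fin m → Fin k → ℝ))
    [∀ r, IsProbabilityMeasure (μ r)]
    (hL2 : ∀ r i j, MemLp (fun Z => Z i j) 2 (μ r))
    (hvar : ∀ r i j, ∫ Z, (Z i j) ^ 2 ∂(μ r) = 1)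
    (hcov : ∀ r (i : Fin m) (j : Fin k) (i' : Fin m) (j' : Fin k), (i, j) ≠ (i', j') →
      ∫ Z, Z i j * Z i' j' ∂(μ r) = 0)
    (M : MultilinearMap ℝ (fun _ : Fin ℓ => (Fin m → Fin k → ℝ)) ℝ)
    (i : Fin m) (j : Fin k) :
    ∫ Z, (∏ r, Z r i j) * M Z ∂(Measure.pi μ)
      = M (fun _ => Pi.single i (Pi.single j 1)) :=
  stmt7_general m k ℓ μ hL2 hvar hcov M i j
end

section
/- Let m, k ≥ 1, L ∈ ℕ, and let g : ℝ^{m×k} → ℝ be of class C^{L+1}. Let Z^{(1)},…,Z^{(L)} be independent random real m × k matrices whose entries are almost surely bounded and satisfy, for each r, E[(Z^{(r)}_{ij})^2] = 1 for all (i,j) and E[Z^{(r)}_{ij} Z^{(r)}_{rs}] = 0 whenever (i,j) ≠ (r,s). Fix Y ∈ ℝ^{m×k} and (i,j), and define the random variable Q̂_{ij} = Σ_{ℓ=0}^{L} ((−1)^ℓ/ℓ!) (Z^{(1)}_{ij} ⋯ Z^{(ℓ)}_{ij}) · D^ℓ g(Y)[Z^{(1)},…,Z^{(ℓ)}], where D^ℓ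 g(Y)[δ_1,…,δ_ℓ] denotes the ℓ-th directional (Fréchet) derivative of g at Y in the directions δ_1,…,δ_ℓ (a symmetric ℓ-multilinear map), the ℓ = 0 term being g(Y). Then E[Q̂_{ij}] − g(Y − E_{ij}) = ((−1)^L/L!) ∫_0^1 (1−α)^L (∂^{L+1} g/∂Y_{ij}^{L+1})(Y − α E_{ij}) dα, where ∂^{L+1} g/∂Y_{ij}^{L+1} is the (L+1)-th derivative of t ↦ g(Y + t E_{ij}). In particular, Q̂_{ij} is an estimator of g(Y − E_{ij}) whose bias equals this integral remainder. -/
open MeasureTheory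

/-!
Expanding `D^ℓ g(Y)[Z⁽¹⁾, …, Z⁽ˡ⁾]` multilinearly in the matrix units and integrating one
independent factor at a time, `E[Z⁽¹⁾_{ij} ⋯ Z⁽ˡ⁾_{ij} · D^ℓ g(Y)[Z⁽¹⁾, …, Z⁽ˡ⁾]]` collapses to
`D^ℓ g(Y)[E_{ij}, …, E_{ij}]`, because `E[Z_{ij} Z_{ab}] = δ_{(i,j),(a,b)}`. Hence `E[Q̂_{ij}]`
is the degree-`L` Taylor polynomial of `h t = g (Y + t • E_{ij})` at `0`, evaluated at `-1`, and
the bias is the integral form of Taylor's remainder, after the substitution `t = -α`.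
-/

theorem Function.Injective.prod_comp_eq_prod_extend {ι κ α M : Type*} [Fintype ι] [Fintype κ]
    [CommMonoid M] {e : ι → κ} (he : Function.Injective e) (φ : ι → α → M) (x : κ → α) :
    ∏ r, φ r (x (e r)) = ∏ s, Function.extend e φ (fun _ _ => 1) s (x s) :=
  Fintype.prod_of_injective e he _ _
    (fun s hs => by rw [Function.extend_apply' _ _ _ (by simpa using hs)])
    (fun r => by rw [he.extend_apply])

section ProductMeasure

variable {ι κ V : Type*} [Fintype ι] [Fintype κ] [MeasurableSpace V] {e : ι → κ}
  (μ : κ → Measure V) [∀ s, IsProbabilityMeasure (μ s)]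

theorem integrable_pi_prod_comp_of_injective (he : Function.Injective e) {φ : ι → V → ℝ}
    (hφ : ∀ r, Integrable (φ r) (μ (e r))) :
    Integrable (fun Z : κ → V => ∏ r, φ r (Z (e r))) (Measure.pi μ) := by
  simp_rw [he.prod_comp_eq_prod_extend]
  refine Integrable.fintype_prod fun s => ?_
  by_cases hs : ∃ r, e r = s
  · obtain ⟨r, rfl⟩ := hs
    rw [he.extend_apply]
    exact hφ r
  · rw [Function.extend_apply' _ _ _ hs]
    exact integrable_const _

theorem integral_pi_prod_comp_of_injective (he : Function.Injective e) (φ : ι → V → ℝ) :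
    ∫ Z : κ → V, ∏ r, φ r (Z (e r)) ∂Measure.pi μ = ∏ r, ∫ v, φ r v ∂μ (e r) := by
  simp_rw [he.prod_comp_eq_prod_extend, integral_fintype_prod_eq_prod]
  exact (Fintype.prod_of_injective e he _ _
    (fun s hs => by simp [Function.extend_apply' _ _ _ (by simpa using hs)])
    (fun r => by rw [he.extend_apply])).symm

end ProductMeasure

section Matrices

variable {m k : ℕ}

theorem sum_entry_smul_single {R : Type*} [Semiring R] (v : Fin m → Fin k → R) :
    ∑ p : Fin m × Fin k, v p.1 p.2 • (Pi.single p.1 (Pi.single p.2 1) : Fin m → Fin k → R)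
      = v := by
  ext a b
  simp [Fintype.sum_prod_type, Finset.sum_apply, Pi.single_apply,
    apply_ite (fun u : Fin k → R => u b)]

theorem MultilinearMap.apply_eq_sum_prod_entry_smul {R M ι : Type*} [CommSemiring R]
    [AddCommMonoid M] [Module R M] [Fintype ι] [DecidableEq ι]
    (f : MultilinearMap R (fun _ : ι => Fin m → Fin k → R) M) (x : ι → Fin m → Fin k → R) :
    f x = ∑ q : ι → Fin m × Fin k,
      (∏ r, x r (q r).1 (q r).2) • f (fun r => Pi.single (q r).1 (Pi.single (q r).2 1)) := by
  conv_lhs => rw [← funext fun r => sum_entry_smul_single (x r), f.map_sum]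
  simp_rw [f.map_smul_univ]

theorem prod_entry_mul_apply_eq_sum {ι : Type*} [Fintype ι] [DecidableEq ι]
    (f : MultilinearMap ℝ (fun _ : ι => Fin m → Fin k → ℝ) ℝ) (x : ι → Fin m → Fin k → ℝ)
    (i : Fin m) (j : Fin k) :
    (∏ r, x r i j) * f x = ∑ q : ι → Fin m × Fin k,
      f (fun r => Pi.single (q r).1 (Pi.single (q r).2 1)) *
        ∏ r, x r i j * x r (q r).1 (q r).2 := by
  rw [f.apply_eq_sum_prod_entry_smul, Finset.mul_sum]
  refine Finset.sum_congr rfl fun q _ => ?_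
  rw [smul_eq_mul, Finset.prod_mul_distrib]
  ring

variable {ν : Measure (Fin m → Fin k → ℝ)}

theorem integrable_entry_mul_entry [IsFiniteMeasure ν]
    (hbdd : ∃ C : ℝ, ∀ᵐ Z ∂ν, ∀ i j, |Z i j| ≤ C) (i : Fin m) (j : Fin k) (a : Fin m)
    (b : Fin k) : Integrable (fun Z : Fin m → Fin k → ℝ => Z i j * Z a b) ν := by
  obtain ⟨C, hC⟩ := hbdd
  refine Integrable.of_bound (by fun_prop) (C * C) ?_
  filter_upwards [hC] with Z hZ
  rw [norm_mul]
  exact mul_le_mul (hZ i j) (hZ a b) (norm_nonneg _) ((abs_nonneg _).trans (hZ i j))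

theorem integral_entry_mul_entry (hvar : ∀ i j, ∫ Z, (Z i j) ^ 2 ∂ν = 1)
    (hcov : ∀ (i : Fin m) (j : Fin k) (i' : Fin m) (j' : Fin k), (i, j) ≠ (i', j') →
      ∫ Z, Z i j * Z i' j' ∂ν = 0)
    (i : Fin m) (j : Fin k) (a : Fin m) (b : Fin k) :
    ∫ Z, Z i j * Z a b ∂ν = if (a, b) = (i, j) then 1 else 0 := by
  split_ifs with h
  · obtain ⟨rfl, rfl⟩ := Prod.mk.inj h
    simpa [sq] using hvar a b
  · exact hcov i j a b (Ne.symm h)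

end Matrices

section Estimator

variable {m k : ℕ} {ι κ : Type*} [Fintype ι] [Fintype κ] {e : ι → κ}
  (μ : κ → Measure (Fin m → Fin k → ℝ)) [∀ s, IsProbabilityMeasure (μ s)]

theorem integrable_pi_prod_entry_mul_entry (he : Function.Injective e)
    (hbdd : ∀ s, ∃ C : ℝ, ∀ᵐ Z ∂(μ s), ∀ i j, |Z i j| ≤ C) (i : Fin m) (j : Fin k)
    (q : ι → Fin m × Fin k) :
    Integrable (fun Z : κ → Fin m → Fin k → ℝ => ∏ r, Z (e r) i j * Z (e r) (q r).1 (q r).2)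
      (Measure.pi μ) :=
  integrable_pi_prod_comp_of_injective μ he (φ := fun r v => v i j * v (q r).1 (q r).2)
    fun r => integrable_entry_mul_entry (hbdd (e r)) _ _ _ _

theorem integrable_prod_entry_mul_multilinear [DecidableEq ι] (he : Function.Injective e)
    (hbdd : ∀ s, ∃ C : ℝ, ∀ᵐ Z ∂(μ s), ∀ i j, |Z i j| ≤ C)
    (f : MultilinearMap ℝ (fun _ : ι => Fin m → Fin k → ℝ) ℝ) (i : Fin m) (j : Fin k) :
    Integrable (fun Z : κ → Fin m → Fin k → ℝ => (∏ r, Z (e r) i j) * f (fun r => Z (e r)))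
      (Measure.pi μ) := by
  simp_rw [prod_entry_mul_apply_eq_sum]
  exact integrable_finsetSum _ fun q _ =>
    (integrable_pi_prod_entry_mul_entry μ he hbdd i j q).const_mul _

theorem integral_prod_entry_mul_multilinear [DecidableEq ι] (he : Function.Injective e)
    (hbdd : ∀ s, ∃ C : ℝ, ∀ᵐ Z ∂(μ s), ∀ i j, |Z i j| ≤ C)
    (hvar : ∀ s i j, ∫ Z, (Z i j) ^ 2 ∂(μ s) = 1)
    (hcov : ∀ s (i : Fin m) (j : Fin k) (i' : Fin m) (j' : Fin k), (i, j) ≠ (i', j') →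
      ∫ Z, Z i j * Z i' j' ∂(μ s) = 0)
    (f : MultilinearMap ℝ (fun _ : ι => Fin m → Fin k → ℝ) ℝ) (i : Fin m) (j : Fin k) :
    ∫ Z : κ → Fin m → Fin k → ℝ, (∏ r, Z (e r) i j) * f (fun r => Z (e r)) ∂Measure.pi μ
      = f (fun _ => Pi.single i (Pi.single j 1)) := by
  have hsummand : ∀ q : ι → Fin m × Fin k,
      ∫ Z : κ → Fin m → Fin k → ℝ, f (fun r => Pi.single (q r).1 (Pi.single (q r).2 1)) *
        ∏ r, Z (e r) i j * Z (e r) (q r).1 (q r).2 ∂Measure.pi μ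
      = if q = fun _ => (i, j) then f (fun _ => Pi.single i (Pi.single j 1)) else 0 := by
    intro q
    rw [integral_const_mul, integral_pi_prod_comp_of_injective μ he
      (fun r v => v i j * v (q r).1 (q r).2)]
    simp_rw [integral_entry_mul_entry (hvar _) (hcov _), Prod.mk.eta, Fintype.prod_boole,
      funext_iff]
    split_ifs with hq <;> simp [hq]
  simp_rw [prod_entry_mul_apply_eq_sum]
  rw [integral_finsetSum _ fun q _ =>
    (integrable_pi_prod_entry_mul_entry μ he hbdd i j q).const_mul _]
  simp_rw [hsummand]
  simp

end Estimator

section PaddedFamily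

variable {m k L l : ℕ} (μ : Fin L → Measure (Fin m → Fin k → ℝ))
  [∀ s, IsProbabilityMeasure (μ s)]

theorem dite_lt_eq_castLE (hl : l ≤ L) {α : Type*} [Zero α] (Z : Fin L → α) (r : Fin l) :
    (if h : (r : ℕ) < L then Z ⟨r, h⟩ else 0) = Z (Fin.castLE hl r) :=
  dif_pos (r.2.trans_le hl)

theorem integrable_prod_entry_mul_multilinear_padded (hl : l ≤ L)
    (hbdd : ∀ s, ∃ C : ℝ, ∀ᵐ Z ∂(μ s), ∀ i j, |Z i j| ≤ C)
    (f : ContinuousMultilinearMap ℝ (fun _ : Fin l => Fin m → Fin k → ℝ) ℝ)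
    (i : Fin m) (j : Fin k) :
    Integrable (fun Z : Fin L → Fin m → Fin k → ℝ =>
      (∏ r : Fin l, (if h : (r : ℕ) < L then Z ⟨r, h⟩ else 0) i j) *
        f (fun r : Fin l => if h : (r : ℕ) < L then Z ⟨r, h⟩ else 0)) (Measure.pi μ) := by
  simp only [dite_lt_eq_castLE hl]
  exact integrable_prod_entry_mul_multilinear μ (Fin.castLE_injective hl) hbdd
    f.toMultilinearMap i j

theorem integral_prod_entry_mul_multilinear_padded (hl : l ≤ L)
    (hbdd : ∀ s, ∃ C : ℝ, ∀ᵐ Z ∂(μ s), ∀ i j, |Z i j| ≤ C)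
    (hvar : ∀ s i j, ∫ Z, (Z i j) ^ 2 ∂(μ s) = 1)
    (hcov : ∀ s (i : Fin m) (j : Fin k) (i' : Fin m) (j' : Fin k), (i, j) ≠ (i', j') →
      ∫ Z, Z i j * Z i' j' ∂(μ s) = 0)
    (f : ContinuousMultilinearMap ℝ (fun _ : Fin l => Fin m → Fin k → ℝ) ℝ)
    (i : Fin m) (j : Fin k) :
    ∫ Z : Fin L → Fin m → Fin k → ℝ,
      (∏ r : Fin l, (if h : (r : ℕ) < L then Z ⟨r, h⟩ else 0) i j) *
        f (fun r : Fin l => if h : (r : ℕ) < L then Z ⟨r, h⟩ else 0) ∂Measure.pi μ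
      = f (fun _ => Pi.single i (Pi.single j 1)) := by
  simp only [dite_lt_eq_castLE hl]
  exact integral_prod_entry_mul_multilinear μ (Fin.castLE_injective hl) hbdd hvar hcov
    f.toMultilinearMap i j

end PaddedFamily

theorem iteratedDeriv_comp_add_smul {V F : Type*} [NormedAddCommGroup V] [NormedSpace ℝ V]
    [NormedAddCommGroup F] [NormedSpace ℝ F] {N : WithTop ℕ∞} {g : V → F} (hg : ContDiff ℝ N g)
    (Y E : V) {n : ℕ} (hn : n ≤ N) (t : ℝ) :
    iteratedDeriv n (fun t : ℝ => g (Y + t • E)) t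
      = iteratedFDeriv ℝ n g (Y + t • E) (fun _ => E) := by
  have hline : (fun t : ℝ => g (Y + t • E))
      = (fun v => g (Y + v)) ∘ ContinuousLinearMap.toSpanSingleton ℝ E := rfl
  rw [iteratedDeriv_eq_iteratedFDeriv, hline,
    ContinuousLinearMap.iteratedFDeriv_comp_right _ (f := fun v => g (Y + v))
      (hg.comp (contDiff_const.add contDiff_id)) t hn]
  simp [iteratedFDeriv_comp_add_left]

theorem taylor_sum_sub_eq_integral {d : ℕ} {h : ℝ → ℝ} (hh : ContDiff ℝ ((d : ℕ∞) + 1) h) :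
    (∑ l ∈ Finset.range (d + 1), ((-1 : ℝ) ^ l / l.factorial) * iteratedDeriv l h 0) - h (-1)
      = ((-1 : ℝ) ^ d / d.factorial) *
          ∫ α in (0 : ℝ)..1, (1 - α) ^ d * iteratedDeriv (d + 1) h (-α) := by
  have hh' : ContDiff ℝ (d + 1 : ℕ) h := by exact_mod_cast hh
  have hU : UniqueDiffOn ℝ (Set.uIcc (0 : ℝ) (-1)) := uniqueDiffOn_uIcc (by norm_num)
  have hwithin : ∀ n ≤ d + 1, ∀ t ∈ Set.uIcc (0 : ℝ) (-1),
      iteratedDerivWithin n h (Set.uIcc 0 (-1)) t = iteratedDeriv n h t := fun n hn t ht =>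
    iteratedDerivWithin_eq_iteratedDeriv hU (hh'.contDiffAt.of_le (by exact_mod_cast hn)) ht
  have taylor := taylor_integral_remainder (x := -1) (x₀ := 0) hh'.contDiffOn
  rw [taylor_within_apply, intervalIntegral.integral_congr (g := fun t =>
      ((-1 - t) ^ d / d.factorial) * iteratedDeriv (d + 1) h t)
      fun t ht => by rw [smul_eq_mul, hwithin _ le_rfl t ht]] at taylor
  rw [Finset.sum_congr rfl fun l hl => by
      rw [hwithin l (Finset.mem_range_succ_iff.1 hl |>.trans d.le_succ) 0 Set.left_mem_uIcc]]
    at taylor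
  calc _ = -(h (-1) - ∑ l ∈ Finset.range (d + 1),
          (((l.factorial : ℝ))⁻¹ * (-1 - 0) ^ l) • iteratedDeriv l h 0) := by
        simp only [sub_zero, smul_eq_mul, neg_sub, div_eq_inv_mul, mul_comm]
    _ = -∫ t in (0 : ℝ)..(-1), ((-1 - t) ^ d / d.factorial) * iteratedDeriv (d + 1) h t := by
        rw [taylor]
    _ = ∫ α in (0 : ℝ)..1, ((-1 - -α) ^ d / d.factorial) * iteratedDeriv (d + 1) h (-α) := by
        rw [intervalIntegral.integral_comp_neg
          (fun t => ((-1 - t) ^ d / d.factorial) * iteratedDeriv (d + 1) h t),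
          intervalIntegral.integral_symm, neg_zero, neg_neg]
    _ = _ := by
        rw [← intervalIntegral.integral_const_mul]
        congr 1 with α
        rw [show (-1 : ℝ) - -α = -1 * (1 - α) by ring, mul_pow]
        ring

theorem stmt9_general (m k L : ℕ)
    (g : (Fin m → Fin k → ℝ) → ℝ) (hg : ContDiff ℝ ((L : ℕ∞) + 1) g)
    (μ : Fin L → Measure (Fin m → Fin k → ℝ))
    [∀ r, IsProbabilityMeasure (μ r)]
    (hbdd : ∀ r, ∃ C : ℝ, ∀ᵐ Z ∂(μ r), ∀ i j, |Z i j| ≤ C)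
    (hvar : ∀ r i j, ∫ Z, (Z i j) ^ 2 ∂(μ r) = 1)
    (hcov : ∀ r (i : Fin m) (j : Fin k) (i' : Fin m) (j' : Fin k), (i, j) ≠ (i', j') →
      ∫ Z, Z i j * Z i' j' ∂(μ r) = 0)
    (Y : Fin m → Fin k → ℝ) (i : Fin m) (j : Fin k) :
    (∫ Z : Fin L → (Fin m → Fin k → ℝ),
        (∑ l ∈ Finset.range (L + 1), ((-1 : ℝ) ^ l / l.factorial) *
          ((∏ r : Fin l, (if h : (r : ℕ) < L then Z ⟨(r : ℕ), h⟩ else 0) i j) *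
            iteratedFDeriv ℝ l g Y
              (fun r : Fin l => if h : (r : ℕ) < L then Z ⟨(r : ℕ), h⟩ else 0)))
        ∂(Measure.pi μ))
      - g (Y - Pi.single i (Pi.single j 1))
      = ((-1 : ℝ) ^ L / L.factorial) *
          ∫ α in (0 : ℝ)..1, (1 - α) ^ L *
            iteratedDeriv (L + 1)
              (fun t => g (Y + t • (Pi.single i (Pi.single j 1) : Fin m → Fin k → ℝ)))
              (-α) := by
  set E : Fin m → Fin k → ℝ := Pi.single i (Pi.single j 1)
  set φ : ℝ → ℝ := fun t => g (Y + t • E)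
  have hle : ∀ l ∈ Finset.range (L + 1), l ≤ L := fun l => Finset.mem_range_succ_iff.1
  have hderiv : ∀ l ≤ L, iteratedFDeriv ℝ l g Y (fun _ => E) = iteratedDeriv l φ 0 :=
    fun l hl => by
      rw [iteratedDeriv_comp_add_smul hg Y E (by exact_mod_cast hl.trans L.le_succ) 0,
        zero_smul, add_zero]
  rw [integral_finsetSum _ fun l hl => (integrable_prod_entry_mul_multilinear_padded μ
      (hle l hl) hbdd (iteratedFDeriv ℝ l g Y) i j).const_mul _,
    Finset.sum_congr rfl fun l hl => by
      rw [integral_const_mul, integral_prod_entry_mul_multilinear_padded μ (hle l hl) hbdd hvar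
        hcov (iteratedFDeriv ℝ l g Y) i j, hderiv l (hle l hl)],
    show g (Y - E) = φ (-1) by simp [φ, sub_eq_add_neg]]
  exact taylor_sum_sub_eq_integral (hg.comp (by fun_prop))

/-- Bias of the randomized Taylor-expansion estimator `Q̂_{ij}` of `g(Y - E_{ij})`:
for `g` of class `C^{L+1}` and independent random matrices `Z⁽¹⁾,…,Z⁽ᴸ⁾` with a.s.
bounded, normalized and uncorrelated entries,
`E[Q̂_{ij}] - g(Y - E_{ij}) = ((-1)^L/L!) ∫_0^1 (1-α)^L (∂^{L+1}g/∂Y_{ij}^{L+1})(Y - α E_{ij}) dα`. -/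
theorem stmt9 (m k L : ℕ) (hm : 1 ≤ m) (hk : 1 ≤ k)
    (g : (Fin m → Fin k → ℝ) → ℝ) (hg : ContDiff ℝ ((L : ℕ∞) + 1) g)
    (μ : Fin L → Measure (Fin m → Fin k → ℝ))
    [∀ r, IsProbabilityMeasure (μ r)]
    (hbdd : ∀ r, ∃ C : ℝ, ∀ᵐ Z ∂(μ r), ∀ i j, |Z i j| ≤ C)
    (hvar : ∀ r i j, ∫ Z, (Z i j) ^ 2 ∂(μ r) = 1)
    (hcov : ∀ r (i : Fin m) (j : Fin k) (i' : Fin m) (j' : Fin k), (i, j) ≠ (i', j') →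
      ∫ Z, Z i j * Z i' j' ∂(μ r) = 0)
    (Y : Fin m → Fin k → ℝ) (i : Fin m) (j : Fin k) :
    (∫ Z : Fin L → (Fin m → Fin k → ℝ),
        (∑ l ∈ Finset.range (L + 1), ((-1 : ℝ) ^ l / l.factorial) *
          ((∏ r : Fin l, (if h : (r : ℕ) < L then Z ⟨(r : ℕ), h⟩ else 0) i j) *
            iteratedFDeriv ℝ l g Y
              (fun r : Fin l => if h : (r : ℕ) < L then Z ⟨(r : ℕ), h⟩ else 0)))
        ∂(Measure.pi μ))
      - g (Y - Pi.single i (Pi.single j 1))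
      = ((-1 : ℝ) ^ L / L.factorial) *
          ∫ α in (0 : ℝ)..1, (1 - α) ^ L *
            iteratedDeriv (L + 1)
              (fun t => g (Y + t • (Pi.single i (Pi.single j 1) : Fin m → Fin k → ℝ)))
              (-α) :=
  stmt9_general m k L g hg μ hbdd hvar hcov Y i j
end

section
/- Let m, k ≥ 1, let 𝟙 ∈ ℝ^k be the column vector of ones, and define P_V X = X − (1/k) X 𝟙 𝟙^t on real m × k matrices. Let h : ℝ^{m×k} → ℝ be any function, let Z ∈ ℝ^{m×k}, and suppose W* is a minimizer of W ↦ (1/2)‖P_V Z − W‖_F^2 + h(W) over the subspace {W ∈ ℝ^{m×k} : W 𝟙 = 0}. Then: (a) every minimizer X of X ↦ (1/2)‖Z − X‖_F^2 + h(P_V X) over ℝ^{m×k} satisfies X 𝟙 = Z 𝟙; and (b) the matrix X* = (1/k) Z 𝟙 𝟙^t + W* is a minimizer of X ↦ (1/2)‖Z − X‖_F^2 + h(P_V X) over all of ℝ^{m×k}. (In particular, taking h = γλ‖·‖_*, the proximal operator of the centered nuclear norm penalty Z ↦ λ‖P_V Z‖_* at Z equals (1/k) Z 𝟙 𝟙^t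 plus the proximal operator of γλ‖·‖_* evaluated at P_V Z.) -/
/-!
Right multiplication by `E = 𝟙𝟙ᵗ/k` is the orthogonal projection onto `Vᗮ`, so `Z - X` splits
orthogonally into `(Z - X)E` and `P_V Z - P_V X`. Hence for every `X`

  `½‖Z - X‖² + h(P_V X) = ½‖(Z - X)E‖² + ½‖P_V Z - P_V X‖² + h(P_V X)
                        ≥ ½‖(Z - X)E‖² + ½‖P_V Z - W*‖² + h(W*)`,

and the last two terms are the objective at `X* = ZE + W*`. This shows that `X*` is a minimizer,
and that any other minimizer has `(Z - X)E = 0`, i.e. `X𝟙 = Z𝟙`.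
-/

open Matrix

namespace Matrix

variable {m n R : Type*} [Fintype n]

lemma sub_mul_self_mul_eq_zero [Ring R] {E : Matrix n n R} (hE : IsIdempotentElem E)
    (X : Matrix m n R) : (X - X * E) * E = 0 := by
  rw [Matrix.sub_mul, Matrix.mul_assoc, hE.eq, sub_self]

lemma mul_of_one_apply [NonAssocSemiring R] (A : Matrix m n R) (i : m) (j : n) :
    (A * (of fun _ _ => 1 : Matrix n n R)) i j = (A *ᵥ fun _ => 1) i := by
  simp [mul_apply, mulVec, dotProduct]

lemma mul_of_one_eq_zero_iff [NonAssocSemiring R] [Nonempty n] {A : Matrix m n R} :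
    A * (of fun _ _ => 1 : Matrix n n R) = 0 ↔ (A *ᵥ fun _ => 1) = 0 := by
  refine ⟨fun hA => funext fun i => ?_, fun hA => ext fun i j => ?_⟩
  · simpa [mul_of_one_apply] using congr_fun₂ hA i (Classical.arbitrary n)
  · simp [mul_of_one_apply, hA]

lemma of_one_mul_of_one [NonAssocSemiring R] :
    (of fun _ _ => 1 : Matrix n n R) * of (fun _ _ => 1)
      = (Fintype.card n : R) • of fun _ _ => 1 := by
  ext i j
  simp [mul_apply]

variable [Fintype m]

lemma trace_transpose_mul_self_nonneg (A : Matrix m n ℝ) : 0 ≤ (Aᵀ * A).trace := by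
  simpa using (posSemidef_conjTranspose_mul_self A).trace_nonneg

lemma trace_transpose_mul_self_eq_zero_iff {A : Matrix m n ℝ} :
    (Aᵀ * A).trace = 0 ↔ A = 0 := by
  simpa using trace_conjTranspose_mul_self_eq_zero_iff (A := A)

lemma trace_transpose_mul_self_eq_add_of_isIdempotentElem [CommRing R] {E : Matrix n n R}
    (hEs : E.IsSymm) (hE : IsIdempotentElem E) (A : Matrix m n R) :
    (Aᵀ * A).trace = ((A * E)ᵀ * (A * E)).trace + ((A - A * E)ᵀ * (A - A * E)).trace := by
  have hcross : ((A * E)ᵀ * (A - A * E)).trace = 0 := by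
    rw [transpose_mul, hEs.eq, Matrix.mul_sub, trace_sub, ← Matrix.mul_assoc, trace_mul_comm _ E,
      ← Matrix.mul_assoc, ← Matrix.mul_assoc E E, hE.eq, sub_self]
  have hcross' : ((A - A * E)ᵀ * (A * E)).trace = 0 := by
    rw [← trace_transpose, transpose_mul, transpose_transpose, hcross]
  conv_lhs => rw [← add_sub_cancel (A * E) A]
  rw [transpose_add, Matrix.add_mul, Matrix.mul_add, Matrix.mul_add, trace_add, trace_add,
    trace_add, hcross, hcross']
  ring

lemma prox_comp_sub_mul_le {E : Matrix n n ℝ} (hEs : E.IsSymm) (hE : IsIdempotentElem E)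
    {h : Matrix m n ℝ → ℝ} {Z Wstar : Matrix m n ℝ} (hWmem : Wstar * E = 0)
    (hWmin : ∀ W : Matrix m n ℝ, W * E = 0 →
      (1 / 2) * ((Z - Z * E - Wstar)ᵀ * (Z - Z * E - Wstar)).trace + h Wstar
        ≤ (1 / 2) * ((Z - Z * E - W)ᵀ * (Z - Z * E - W)).trace + h W)
    (X : Matrix m n ℝ) :
    (1 / 2) * ((Z - (Z * E + Wstar))ᵀ * (Z - (Z * E + Wstar))).trace
        + h (Z * E + Wstar - (Z * E + Wstar) * E)
        + (1 / 2) * (((Z - X) * E)ᵀ * ((Z - X) * E)).trace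
      ≤ (1 / 2) * ((Z - X)ᵀ * (Z - X)).trace + h (X - X * E) := by
  have hstar : Z * E + Wstar - (Z * E + Wstar) * E = Wstar := by
    rw [Matrix.add_mul, Matrix.mul_assoc, hE.eq, hWmem]
    abel
  have hsplit : Z - X - (Z - X) * E = Z - Z * E - (X - X * E) := by
    rw [Matrix.sub_mul]
    abel
  have hpyth := trace_transpose_mul_self_eq_add_of_isIdempotentElem hEs hE (Z - X)
  rw [hsplit] at hpyth
  rw [hstar, ← sub_sub, hpyth]
  linarith [hWmin (X - X * E) (sub_mul_self_mul_eq_zero hE X)]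

end Matrix

theorem stmt11_general (m k : ℕ) (hk : 1 ≤ k)
    (PV : Matrix (Fin m) (Fin k) ℝ → Matrix (Fin m) (Fin k) ℝ)
    (hPV : ∀ X, PV X = X - (k : ℝ)⁻¹ • (X * Matrix.of (fun _ _ => (1 : ℝ))))
    (h : Matrix (Fin m) (Fin k) ℝ → ℝ)
    (Z Wstar : Matrix (Fin m) (Fin k) ℝ)
    (hWmem : Wstar.mulVec (fun _ => (1 : ℝ)) = 0)
    (hWmin : ∀ W : Matrix (Fin m) (Fin k) ℝ, W.mulVec (fun _ => (1 : ℝ)) = 0 →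
      (1 / 2) * Matrix.trace ((PV Z - Wstar)ᵀ * (PV Z - Wstar)) + h Wstar
        ≤ (1 / 2) * Matrix.trace ((PV Z - W)ᵀ * (PV Z - W)) + h W) :
    (∀ X : Matrix (Fin m) (Fin k) ℝ,
      (∀ X' : Matrix (Fin m) (Fin k) ℝ,
        (1 / 2) * Matrix.trace ((Z - X)ᵀ * (Z - X)) + h (PV X)
          ≤ (1 / 2) * Matrix.trace ((Z - X')ᵀ * (Z - X')) + h (PV X')) →
      X.mulVec (fun _ => (1 : ℝ)) = Z.mulVec (fun _ => (1 : ℝ))) ∧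
    (∀ X : Matrix (Fin m) (Fin k) ℝ,
      (1 / 2) * Matrix.trace
          ((Z - ((k : ℝ)⁻¹ • (Z * Matrix.of (fun _ _ => (1 : ℝ))) + Wstar))ᵀ *
            (Z - ((k : ℝ)⁻¹ • (Z * Matrix.of (fun _ _ => (1 : ℝ))) + Wstar)))
        + h (PV ((k : ℝ)⁻¹ • (Z * Matrix.of (fun _ _ => (1 : ℝ))) + Wstar))
        ≤ (1 / 2) * Matrix.trace ((Z - X)ᵀ * (Z - X)) + h (PV X)) := by
  have hk0 : (k : ℝ) ≠ 0 := Nat.cast_ne_zero.mpr (by omega)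
  have : Nonempty (Fin k) := ⟨⟨0, hk⟩⟩
  set E : Matrix (Fin k) (Fin k) ℝ := (k : ℝ)⁻¹ • of fun _ _ => 1 with hEdef
  have hEs : E.IsSymm := by ext; simp [hEdef]
  have hE : IsIdempotentElem E := by
    rw [IsIdempotentElem, hEdef, smul_mul_smul, of_one_mul_of_one, Fintype.card_fin, smul_smul,
      mul_assoc, inv_mul_cancel₀ hk0, mul_one]
  have hmem (W : Matrix (Fin m) (Fin k) ℝ) : (W *ᵥ fun _ => 1) = 0 ↔ W * E = 0 := by
    rw [hEdef, Matrix.mul_smul, smul_eq_zero, mul_of_one_eq_zero_iff]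
    simp [hk0]
  -- the statement's products elaborate through a `CStarMatrix` instance, hence `rfl` after `rw`
  have hZE : (k : ℝ)⁻¹ • (Z * of fun _ _ => (1 : ℝ)) = Z * E := by
    rw [hEdef, Matrix.mul_smul]; rfl
  obtain rfl : PV = fun X : Matrix (Fin m) (Fin k) ℝ => X - X * E :=
    funext fun X => by rw [hPV, hEdef, Matrix.mul_smul]; rfl
  rw [hZE]
  have key := prox_comp_sub_mul_le hEs hE ((hmem Wstar).mp hWmem)
    fun W hW => hWmin W ((hmem W).mpr hW)
  refine ⟨fun X hX => ?_, fun X => ?_⟩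
  · have hzero : (((Z - X) * E)ᵀ * ((Z - X) * E)).trace = 0 := by
      linarith [key X, hX (Z * E + Wstar), trace_transpose_mul_self_nonneg ((Z - X) * E)]
    rw [trace_transpose_mul_self_eq_zero_iff, ← hmem, sub_mulVec, sub_eq_zero] at hzero
    exact hzero.symm
  · linarith [key X, trace_transpose_mul_self_nonneg ((Z - X) * E)]

/-- Reduction of the proximal problem for the centered penalty `X ↦ h(P_V X)`:
if `W*` minimizes `W ↦ ½‖P_V Z - W‖_F² + h(W)` over `{W : W𝟙 = 0}`, then
(a) every minimizer `X` of `X ↦ ½‖Z - X‖_F² + h(P_V X)` satisfies `X𝟙 = Z𝟙`, and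
(b) `X* = (1/k) Z 𝟙 𝟙ᵗ + W*` is a minimizer of `X ↦ ½‖Z - X‖_F² + h(P_V X)`.
Squared Frobenius norms are written via `‖A‖_F² = trace(Aᵀ A)`. -/
theorem stmt11 (m k : ℕ) (hm : 1 ≤ m) (hk : 1 ≤ k)
    (PV : Matrix (Fin m) (Fin k) ℝ → Matrix (Fin m) (Fin k) ℝ)
    (hPV : ∀ X, PV X = X - (k : ℝ)⁻¹ • (X * Matrix.of (fun _ _ => (1 : ℝ))))
    (h : Matrix (Fin m) (Fin k) ℝ → ℝ)
    (Z Wstar : Matrix (Fin m) (Fin k) ℝ)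
    (hWmem : Wstar.mulVec (fun _ => (1 : ℝ)) = 0)
    (hWmin : ∀ W : Matrix (Fin m) (Fin k) ℝ, W.mulVec (fun _ => (1 : ℝ)) = 0 →
      (1 / 2) * Matrix.trace ((PV Z - Wstar)ᵀ * (PV Z - Wstar)) + h Wstar
        ≤ (1 / 2) * Matrix.trace ((PV Z - W)ᵀ * (PV Z - W)) + h W) :
    (∀ X : Matrix (Fin m) (Fin k) ℝ,
      (∀ X' : Matrix (Fin m) (Fin k) ℝ,
        (1 / 2) * Matrix.trace ((Z - X)ᵀ * (Z - X)) + h (PV X)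
          ≤ (1 / 2) * Matrix.trace ((Z - X')ᵀ * (Z - X')) + h (PV X')) →
      X.mulVec (fun _ => (1 : ℝ)) = Z.mulVec (fun _ => (1 : ℝ))) ∧
    (∀ X : Matrix (Fin m) (Fin k) ℝ,
      (1 / 2) * Matrix.trace
          ((Z - ((k : ℝ)⁻¹ • (Z * Matrix.of (fun _ _ => (1 : ℝ))) + Wstar))ᵀ *
            (Z - ((k : ℝ)⁻¹ • (Z * Matrix.of (fun _ _ => (1 : ℝ))) + Wstar)))
        + h (PV ((k : ℝ)⁻¹ • (Z * Matrix.of (fun _ _ => (1 : ℝ))) + Wstar))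
        ≤ (1 / 2) * Matrix.trace ((Z - X)ᵀ * (Z - X)) + h (PV X)) :=
  stmt11_general m k hk PV hPV h Z Wstar hWmem hWmin
end

section
/- Let k ≥ 1 and let p ∈ ℝ^k satisfy p_j ≥ 0 for all j and Σ_{j=1}^k p_j = 1. Define the linear map H_p on ℝ^k by (H_p v)_j = p_j v_j − p_j Σ_{s=1}^k p_s v_s, i.e. H_p = diag(p) − p p^t. Then for every v ∈ ℝ^k, ‖H_p v‖_2 ≤ (1/2)‖v‖_2, where ‖·‖_2 is the Euclidean norm. (This is the per-row Hessian of the multinomial negative log-likelihood in the softmax parametrization, so the gradient of that negative log-likelihood is Lipschitz with constant 1/2.) -/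
/-- The map `H_p = diag(p) - p pᵗ`, for `p` a probability vector, is a contraction
by the factor `1/2` in Euclidean norm: `‖H_p v‖₂ ≤ (1/2)‖v‖₂`. -/
theorem stmt12 (k : ℕ) (hk : 1 ≤ k) (p : Fin k → ℝ)
    (hp : ∀ j, 0 ≤ p j) (hsum : ∑ j, p j = 1) (v : Fin k → ℝ) :
    Real.sqrt (∑ j, (p j * v j - p j * ∑ s, p s * v s) ^ 2)
      ≤ (1 / 2) * Real.sqrt (∑ j, (v j) ^ 2) := by
  have hple : ∀ j, p j ≤ 1 := by
    intro j
    calc p j ≤ ∑ s, p s := Finset.single_le_sum (fun s _ => hp s) (Finset.mem_univ j)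
    _ = 1 := hsum
  set A : Fin k → Fin k → ℝ :=
    fun j s => if j = s then p j * (1 - p j) else -(p j * p s) with hA
  set B : Fin k → Fin k → ℝ :=
    fun j s => if j = s then p j * (1 - p j) else p j * p s with hB
  have hBnonneg : ∀ j s, 0 ≤ B j s := by
    intro j s
    simp only [hB]
    split
    · exact mul_nonneg (hp j) (by linarith [hple j])
    · exact mul_nonneg (hp j) (hp s)
  have hAabs : ∀ j s, |A j s| = B j s := by
    intro j s
    simp only [hA, hB]
    split
    · exact abs_of_nonneg (mul_nonneg (hp j) (by linarith [hple j]))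
    · rw [abs_neg]; exact abs_of_nonneg (mul_nonneg (hp j) (hp s))
  have herase : ∀ j : Fin k, ∑ s ∈ Finset.univ.erase j, p s = 1 - p j := by
    intro j
    have := Finset.add_sum_erase Finset.univ p (Finset.mem_univ j)
    rw [hsum] at this
    linarith
  have hrow : ∀ j, ∑ s, A j s * v s = p j * v j - p j * ∑ s, p s * v s := by
    intro j
    rw [← Finset.add_sum_erase Finset.univ (fun s => A j s * v s) (Finset.mem_univ j)]
    have h1 : ∀ s ∈ Finset.univ.erase j, A j s * v s = -(p j * (p s * v s)) := by
      intro s hs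
      have hne : j ≠ s := fun h => (Finset.mem_erase.mp hs).1 h.symm
      simp only [hA, if_neg hne]; ring
    rw [Finset.sum_congr rfl h1, Finset.sum_neg_distrib, ← Finset.mul_sum]
    have h2 : ∑ s ∈ Finset.univ.erase j, p s * v s = (∑ s, p s * v s) - p j * v j := by
      have h := Finset.add_sum_erase Finset.univ (fun s => p s * v s) (Finset.mem_univ j)
      linarith
    simp only [hA, if_pos rfl, h2]
    ring
  have hrowB : ∀ j, ∑ s, B j s = 2 * (p j * (1 - p j)) := by
    intro j
    rw [← Finset.add_sum_erase Finset.univ (B j) (Finset.mem_univ j)]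
    have h1 : ∀ s ∈ Finset.univ.erase j, B j s = p j * p s := by
      intro s hs
      have hne : j ≠ s := fun h => (Finset.mem_erase.mp hs).1 h.symm
      simp only [hB, if_neg hne]
    rw [Finset.sum_congr rfl h1, ← Finset.mul_sum, herase j]
    simp only [hB, if_pos rfl]
    ring
  have hcolB : ∀ s, ∑ j, B j s = 2 * (p s * (1 - p s)) := by
    intro s
    rw [← Finset.add_sum_erase Finset.univ (fun j => B j s) (Finset.mem_univ s)]
    have h1 : ∀ j ∈ Finset.univ.erase s, B j s = p s * p j := by
      intro j hj
      have hne : j ≠ s := (Finset.mem_erase.mp hj).1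
      simp only [hB, if_neg hne]; ring
    rw [Finset.sum_congr rfl h1, ← Finset.mul_sum, herase s]
    simp only [hB, if_pos rfl]
    ring
  have hhalf : ∀ j : Fin k, 2 * (p j * (1 - p j)) ≤ 1 / 2 := by
    intro j
    nlinarith [sq_nonneg (2 * p j - 1)]
  -- pointwise Cauchy-Schwarz (Schur test) bound
  have hpt : ∀ j, (p j * v j - p j * ∑ s, p s * v s) ^ 2
      ≤ (1 / 2) * ∑ s, B j s * v s ^ 2 := by
    intro j
    rw [← hrow j]
    have habs : |∑ s, A j s * v s| ≤ ∑ s, B j s * |v s| := by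
      refine le_trans (Finset.abs_sum_le_sum_abs _ _) ?_
      refine Finset.sum_le_sum fun s _ => ?_
      rw [abs_mul, hAabs]
    have h1 : (∑ s, A j s * v s) ^ 2 ≤ (∑ s, B j s * |v s|) ^ 2 := by
      have h0 : 0 ≤ |∑ s, A j s * v s| := abs_nonneg _
      calc (∑ s, A j s * v s) ^ 2 = |∑ s, A j s * v s| ^ 2 := (sq_abs _).symm
      _ ≤ (∑ s, B j s * |v s|) ^ 2 := by nlinarith
    have h2 : (∑ s, B j s * |v s|) ^ 2
        ≤ (∑ s, B j s) * (∑ s, B j s * v s ^ 2) := by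
      have hCS := Finset.sum_mul_sq_le_sq_mul_sq Finset.univ
        (fun s => Real.sqrt (B j s)) (fun s => Real.sqrt (B j s) * |v s|)
      have e1 : ∀ s : Fin k, Real.sqrt (B j s) * (Real.sqrt (B j s) * |v s|)
          = B j s * |v s| := by
        intro s
        rw [← mul_assoc, Real.mul_self_sqrt (hBnonneg j s)]
      have e2 : ∀ s : Fin k, (Real.sqrt (B j s)) ^ 2 = B j s := fun s =>
        Real.sq_sqrt (hBnonneg j s)
      have e3 : ∀ s : Fin k, (Real.sqrt (B j s) * |v s|) ^ 2 = B j s * v s ^ 2 := by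
        intro s
        rw [mul_pow, Real.sq_sqrt (hBnonneg j s), sq_abs]
      simp only [e1, e2, e3] at hCS
      exact hCS
    have h3 : (∑ s, B j s) * (∑ s, B j s * v s ^ 2)
        ≤ (1 / 2) * (∑ s, B j s * v s ^ 2) := by
      have hS : 0 ≤ ∑ s, B j s * v s ^ 2 :=
        Finset.sum_nonneg fun s _ => mul_nonneg (hBnonneg j s) (sq_nonneg _)
      have : ∑ s, B j s ≤ 1 / 2 := by rw [hrowB j]; exact hhalf j
      exact mul_le_mul_of_nonneg_right this hS
    linarith
  have hsum2 : ∑ j, (p j * v j - p j * ∑ s, p s * v s) ^ 2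
      ≤ (1 / 4) * ∑ j, v j ^ 2 := by
    calc ∑ j, (p j * v j - p j * ∑ s, p s * v s) ^ 2
        ≤ ∑ j, (1 / 2) * ∑ s, B j s * v s ^ 2 :=
          Finset.sum_le_sum fun j _ => hpt j
      _ = (1 / 2) * ∑ s, (∑ j, B j s) * v s ^ 2 := by
          rw [← Finset.mul_sum, Finset.sum_comm]
          congr 1
          exact Finset.sum_congr rfl fun s _ => (Finset.sum_mul _ _ _).symm
      _ ≤ (1 / 2) * ∑ s, (1 / 2) * v s ^ 2 := by
          refine mul_le_mul_of_nonneg_left (Finset.sum_le_sum fun s _ => ?_) (by norm_num)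
          have : ∑ j, B j s ≤ 1 / 2 := by rw [hcolB s]; exact hhalf s
          exact mul_le_mul_of_nonneg_right this (sq_nonneg _)
      _ = (1 / 4) * ∑ j, v j ^ 2 := by rw [← Finset.mul_sum]; ring
  calc Real.sqrt (∑ j, (p j * v j - p j * ∑ s, p s * v s) ^ 2)
      ≤ Real.sqrt ((1 / 4) * ∑ j, v j ^ 2) := Real.sqrt_le_sqrt hsum2
    _ = (1 / 2) * Real.sqrt (∑ j, v j ^ 2) := by
        rw [show (1 / 4 : ℝ) = (1 / 2) ^ 2 by norm_num, Real.sqrt_mul (by positivity),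
          Real.sqrt_sq (by norm_num)]
end
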